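/- Let ε > 0. There exists a constant C₂ > 0, depending only on ε, with the following property. Consider the disjoint union of the plane part P = {x ∈ ℝ² : |x| ≥ ε} and the pole part [0, ∞), with pseudometric ρ given by: ρ(x, y) = min(|x − y|, (|x| − ε) + (|y| − ε)) for x, y ∈ P; ρ(x, s) = (|x| − ε) + s for x ∈ P and s ∈ [0, ∞); and ρ(s, s') = |s − s'| for s, s' ∈ [0, ∞). Let Φ map P ∋ x to (F_ε(x), 0) ∈ ℝ³ and [0, ∞) ∋ s to (0, 0, s) ∈ ℝ³. Then for every pair of points u, v in this disjoint union, min(ρ(u, v), ρ(u, v)²) ≤ C₂·‖Φ(u) − Φ(v)‖, where ‖·‖ is the Euclidean norm on ℝ³. -/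

import Mathlib

/-- The projection map `F_ε(x) = ((|x| − ε)/|x|)·x`, defined on `{x ∈ ℝ² : |x| ≥ ε}`,
used to embed the plane component of the space of varying dimension into `ℝ³`. -/
noncomputable def Fmap (ε : ℝ) (x : EuclideanSpace ℝ (Fin 2)) : EuclideanSpace ℝ (Fin 2) :=
  ((‖x‖ - ε) / ‖x‖) • x

/-- The geodesic distance `ρ` on the disjoint union of the plane part
`P = {x ∈ ℝ² : |x| ≥ ε}` (left summand) and the pole part `[0, ∞)` (right summand). -/
noncomputable def rhoVD (ε : ℝ) :
    (EuclideanSpace ℝ (Fin 2)) ⊕ ℝ → (EuclideanSpace ℝ (Fin 2)) ⊕ ℝ → ℝ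
  | Sum.inl x, Sum.inl y => min ‖x - y‖ ((‖x‖ - ε) + (‖y‖ - ε))
  | Sum.inl x, Sum.inr s => (‖x‖ - ε) + s
  | Sum.inr s, Sum.inl x => (‖x‖ - ε) + s
  | Sum.inr s, Sum.inr s' => |s - s'|

/-- The embedding `Φ` of the space of varying dimension into `ℝ³`: a plane point `x`
is sent to `(F_ε(x), 0)` and a pole point `s` to `(0, 0, s)`. -/
noncomputable def PhiVD (ε : ℝ) :
    (EuclideanSpace ℝ (Fin 2)) ⊕ ℝ → EuclideanSpace ℝ (Fin 3)
  | Sum.inl x => (WithLp.equiv 2 (Fin 3 → ℝ)).symm ![Fmap ε x 0, Fmap ε x 1, 0]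
  | Sum.inr s => (WithLp.equiv 2 (Fin 3 → ℝ)).symm ![0, 0, s]

/-- Membership of a point of the disjoint union in the state space: a plane point must
satisfy `|x| ≥ ε` and a pole point must satisfy `s ≥ 0`. -/
def memVD (ε : ℝ) : (EuclideanSpace ℝ (Fin 2)) ⊕ ℝ → Prop
  | Sum.inl x => ε ≤ ‖x‖
  | Sum.inr s => 0 ≤ s

/-!
Write `a = |x| − ε`, `b = |y| − ε` for plane points and `θ` for the angle between `x` and `y`.
Expanding both norms through `⟪x, y⟫` gives the exact identity
`(|x| + |y|)² |F_ε x − F_ε y|² − (a + b)² |x − y|² = 2ε (|x| + |y| − ε) (|x| − |y|)² (1 + cos θ)`,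
so `(a + b) |x − y| ≤ (a + b + 2ε) |F_ε x − F_ε y|`. If `a + b ≥ ε` this gives
`|x − y| ≤ 3 |F_ε x − F_ε y|`; if `a + b ≤ ε` then `ρ² ≤ (a + b) |x − y| ≤ 3ε |F_ε x − F_ε y|`.
Pairs involving the pole are controlled by `ρ` itself, since `Φ` is an isometry on the pole
and `|Φ(x) − Φ(s)|² = a² + s²`.
-/

open scoped RealInnerProductSpace

section Fmap

variable {ε : ℝ} {x y : EuclideanSpace ℝ (Fin 2)}

lemma norm_Fmap (hε : 0 < ε) (hx : ε ≤ ‖x‖) : ‖Fmap ε x‖ = ‖x‖ - ε := by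
  have hx0 : 0 < ‖x‖ := hε.trans_le hx
  rw [Fmap, norm_smul, Real.norm_eq_abs, abs_of_nonneg (div_nonneg (by linarith) hx0.le),
    div_mul_cancel₀ _ hx0.ne']

lemma mul_norm_sub_le_mul_norm_Fmap_sub (hε : 0 < ε) (hx : ε ≤ ‖x‖)
    (hy : ε ≤ ‖y‖) :
    (‖x‖ + ‖y‖ - 2 * ε) * ‖x - y‖ ≤ (‖x‖ + ‖y‖) * ‖Fmap ε x - Fmap ε y‖ := by
  have hx0 : 0 < ‖x‖ := hε.trans_le hx
  have hy0 : 0 < ‖y‖ := hε.trans_le hy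
  have hcos : 0 ≤ ‖x‖ * ‖y‖ + ⟪x, y⟫ := by
    linarith [neg_le_of_abs_le (abs_real_inner_le_norm x y)]
  have hFF : ‖Fmap ε x - Fmap ε y‖ ^ 2 = (‖x‖ - ε) ^ 2 + (‖y‖ - ε) ^ 2
      - 2 * ((‖x‖ - ε) / ‖x‖) * ((‖y‖ - ε) / ‖y‖) * ⟪x, y⟫ := by
    rw [norm_sub_sq_real, norm_Fmap hε hx, norm_Fmap hε hy, Fmap, Fmap, real_inner_smul_left,
      real_inner_smul_right]
    ring
  have key : ((‖x‖ + ‖y‖) * ‖Fmap ε x - Fmap ε y‖) ^ 2 - ((‖x‖ + ‖y‖ - 2 * ε) * ‖x - y‖) ^ 2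
      = 2 * ε * (‖x‖ + ‖y‖ - ε) * (‖x‖ - ‖y‖) ^ 2 * (‖x‖ * ‖y‖ + ⟪x, y⟫) / (‖x‖ * ‖y‖) := by
    rw [mul_pow, mul_pow, hFF, norm_sub_sq_real]
    field_simp
    ring
  refine le_of_sq_le_sq (sub_nonneg.1 (key ▸ ?_)) (by positivity)
  have : 0 ≤ ‖x‖ + ‖y‖ - ε := by linarith
  positivity

end Fmap

lemma min_min_sq_le_of_mul_le {ε s L D : ℝ} (hε : 0 ≤ ε) (hs : 0 ≤ s) (hL : 0 ≤ L)
    (hD : 0 ≤ D) (h : s * L ≤ (s + 2 * ε) * D) :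
    min (min L s) (min L s ^ 2) ≤ 3 * (1 + ε) * D := by
  rcases le_or_gt s ε with hsε | hεs
  · calc min (min L s) (min L s ^ 2) ≤ min L s ^ 2 := min_le_right _ _
      _ ≤ s * L := by
          rw [sq, mul_comm s]
          exact mul_le_mul (min_le_left _ _) (min_le_right _ _) (le_min hL hs) hL
      _ ≤ 3 * (1 + ε) * D := by nlinarith
  · have hL3 : L ≤ 3 * D := le_of_mul_le_mul_left (by nlinarith) (hε.trans_lt hεs)
    calc min (min L s) (min L s ^ 2) ≤ L := (min_le_left _ _).trans (min_le_left _ _)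
      _ ≤ 3 * (1 + ε) * D := by nlinarith

section PhiVD

variable (ε : ℝ) (x y : EuclideanSpace ℝ (Fin 2)) (s t : ℝ)

lemma norm_PhiVD_inl_sub_inl :
    ‖PhiVD ε (.inl x) - PhiVD ε (.inl y)‖ = ‖Fmap ε x - Fmap ε y‖ := by
  simp [PhiVD, EuclideanSpace.norm_eq, Fin.sum_univ_three, Fin.sum_univ_two]

lemma norm_PhiVD_inl_sub_inr_sq :
    ‖PhiVD ε (.inl x) - PhiVD ε (.inr s)‖ ^ 2 = ‖Fmap ε x‖ ^ 2 + s ^ 2 := by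
  simp [PhiVD, EuclideanSpace.norm_sq_eq, Fin.sum_univ_three, Fin.sum_univ_two]

lemma norm_PhiVD_inr_sub_inr : ‖PhiVD ε (.inr s) - PhiVD ε (.inr t)‖ = |s - t| := by
  simp [PhiVD, EuclideanSpace.norm_eq, Fin.sum_univ_three, Real.sqrt_sq_eq_abs]

end PhiVD

lemma rhoVD_inl_inr_le {ε : ℝ} (hε : 0 < ε) {x : EuclideanSpace ℝ (Fin 2)} (hx : ε ≤ ‖x‖)
    (s : ℝ) : rhoVD ε (.inl x) (.inr s) ≤ 2 * ‖PhiVD ε (.inl x) - PhiVD ε (.inr s)‖ := by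
  have hN := norm_PhiVD_inl_sub_inr_sq ε x s
  rw [norm_Fmap hε hx] at hN
  refine le_of_sq_le_sq ?_ (by positivity)
  rw [rhoVD, mul_pow, hN]
  nlinarith [sq_nonneg (‖x‖ - ε - s)]

/-- There is a constant `C₂ > 0`, depending only on `ε`, such that
`min(ρ(u,v), ρ(u,v)²) ≤ C₂·‖Φ(u) − Φ(v)‖` for all points `u, v` of the space of
varying dimension. -/
theorem rho_min_sq_le_const_mul_norm_Phi (ε : ℝ) (hε : 0 < ε) :
    ∃ C₂ > (0 : ℝ), ∀ u v : (EuclideanSpace ℝ (Fin 2)) ⊕ ℝ,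
      memVD ε u → memVD ε v →
        min (rhoVD ε u v) ((rhoVD ε u v) ^ 2) ≤ C₂ * ‖PhiVD ε u - PhiVD ε v‖ := by
  refine ⟨3 * (1 + ε), by positivity, ?_⟩
  have h3 : (2 : ℝ) ≤ 3 * (1 + ε) := by linarith
  rintro (x | s) (y | t) hu hv
  · simp only [memVD] at hu hv
    rw [norm_PhiVD_inl_sub_inl]
    refine min_min_sq_le_of_mul_le hε.le (by linarith) (norm_nonneg _) (norm_nonneg _) ?_
    linarith [mul_norm_sub_le_mul_norm_Fmap_sub hε hu hv]
  · exact (min_le_left _ _).trans ((rhoVD_inl_inr_le hε hu t).trans (by gcongr))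
  · rw [norm_sub_rev]
    exact (min_le_left _ _).trans ((rhoVD_inl_inr_le hε hv s).trans (by gcongr))
  · rw [norm_PhiVD_inr_sub_inr]
    exact (min_le_left _ _).trans (le_mul_of_one_le_left (abs_nonneg _) (by linarith))
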